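/- In the 5-item 2-agent non-existence example, if Alice receives exactly 2 items in a competitive equilibrium, then her bundle must be vw, and Bob then receives xyz; but since b > b/3 + a/2, Bob can afford the pair consisting of his cheapest item and Alice's cheapest item, which he strictly prefers to xyz — contradiction. -/
import Mathlib


open Finset

/-- `r A B` means bundle `A` is strictly preferred to bundle `B`.
The preference is transitive, asymmetric, total (strict) and monotone. -/
def StrictMonoPref {m : ℕ} (r : Finset (Fin m) → Finset (Fin m) → Prop) : Prop :=
  (∀ A B C, r A B → r B C → r A C) ∧
  (∀ A B, r A B → ¬ r B A) ∧
  (∀ A B : Finset (Fin m), A ≠ B → r A B ∨ r B A) ∧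
  (∀ A B : Finset (Fin m), A ⊂ B → r B A)

/-- Competitive equilibrium: positive prices, the bundles partition all items,
every agent with a non-empty bundle pays exactly their income, and every agent
either strictly prefers their own bundle to, or cannot afford, any other bundle. -/
def IsCE {m n : ℕ} (t : Fin n → ℝ)
    (pref : Fin n → Finset (Fin m) → Finset (Fin m) → Prop)
    (p : Fin m → ℝ) (X : Fin n → Finset (Fin m)) : Prop :=
  (∀ k, 0 < p k) ∧
  (∀ i j, i ≠ j → Disjoint (X i) (X j)) ∧
  (Finset.univ.biUnion X = Finset.univ) ∧
  (∀ i, X i ≠ ∅ → ∑ k ∈ X i, p k = t i) ∧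
  (∀ i (Y : Finset (Fin m)), Y ≠ X i → pref i (X i) Y ∨ t i < ∑ k ∈ Y, p k)

namespace FiveItemsCaseTwo

def v : Fin 5 := 0
def w : Fin 5 := 1
def x : Fin 5 := 2
def y : Fin 5 := 3
def z : Fin 5 := 4

/-- **The 2-item case of the 5-item 2-agent non-existence example.**
Incomes `a > b > 3a/4 > 0`.  Alice prefers every triplet to every pair other
than `vw`; Bob prefers each of `vx, vy, vz, wx, wy, wz` to `xyz`.
Then there is no competitive equilibrium in which Alice receives exactly
2 items: her pair would have to be `vw` (else she envies Bob's triplet) and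
Bob would get `xyz`; but since `b > b/3 + a/2`, Bob can afford the pair made of
his cheapest item and Alice's cheapest item, which he prefers to `xyz`. -/
theorem no_CE_with_Alice_two_items
    (a b : ℝ) (ha : 0 < a) (hab : a > b) (hb34 : b > 3 * a / 4)
    (pref : Fin 2 → Finset (Fin 5) → Finset (Fin 5) → Prop)
    (hpref : ∀ i, StrictMonoPref (pref i))
    -- Alice prefers every triplet to every pair other than vw
    (hA : ∀ T S : Finset (Fin 5), T.card = 3 → S.card = 2 → S ≠ {v, w} →
      pref 0 T S)
    -- Bob prefers every mixed pair to xyz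
    (hB : ∀ T : Finset (Fin 5),
      (T = {v, x} ∨ T = {v, y} ∨ T = {v, z} ∨
       T = {w, x} ∨ T = {w, y} ∨ T = {w, z}) → pref 1 T {x, y, z}) :
    ¬ ∃ (p : Fin 5 → ℝ) (X : Fin 2 → Finset (Fin 5)),
        IsCE ![a, b] pref p X ∧ (X 0).card = 2 := by
  rintro ⟨p, X, ⟨hpos, hdisj, hcover, hbudget, hopt⟩, hcard0⟩
  have t0 : (![a, b] : Fin 2 → ℝ) 0 = a := rfl
  have t1 : (![a, b] : Fin 2 → ℝ) 1 = b := rfl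
  have hunion : ∀ k : Fin 5, k ∈ X 0 ∨ k ∈ X 1 := by
    intro k
    have hk : k ∈ Finset.univ.biUnion X := by rw [hcover]; exact mem_univ k
    simp only [Finset.mem_biUnion, Finset.mem_univ, true_and] at hk
    obtain ⟨i, hi⟩ := hk
    fin_cases i
    · exact Or.inl hi
    · exact Or.inr hi
  have hdis01 : Disjoint (X 0) (X 1) := hdisj 0 1 (by decide)
  have hX1eq : X 1 = Finset.univ \ X 0 := by
    ext k
    simp only [Finset.mem_sdiff, Finset.mem_univ, true_and]
    constructor
    · intro hk
      exact fun h0 => (Finset.disjoint_left.1 hdis01) h0 hk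
    · intro hk
      exact (hunion k).resolve_left hk
  have hcard1 : (X 1).card = 3 := by
    rw [hX1eq, Finset.card_sdiff_of_subset (Finset.subset_univ _), hcard0]
    rfl
  have hne01 : X 1 ≠ X 0 := by
    intro h; rw [h, hcard0] at hcard1; exact absurd hcard1 (by norm_num)
  have hX0ne : X 0 ≠ ∅ := by
    intro h; rw [h] at hcard0; simp at hcard0
  have hX1ne : X 1 ≠ ∅ := by
    intro h; rw [h] at hcard1; simp at hcard1
  have hsumX1 : ∑ k ∈ X 1, p k = b := by rw [hbudget 1 hX1ne]; exact t1
  -- Alice's bundle must be {v, w}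
  have hX0 : X 0 = {v, w} := by
    by_contra hne
    have hpA : pref 0 (X 1) (X 0) := hA (X 1) (X 0) hcard1 hcard0 hne
    rcases hopt 0 (X 1) hne01 with h | h
    · exact (hpref 0).2.1 _ _ hpA h
    · rw [t0, hsumX1] at h; linarith
  have hX1 : X 1 = {x, y, z} := by
    rw [hX1eq, hX0]; decide
  have hsum0 : p v + p w = a := by
    have h := hbudget 0 hX0ne
    rw [hX0, Finset.sum_pair (by decide), t0] at h
    exact h
  have hsum1 : p x + p y + p z = b := by
    have h := hsumX1
    rw [hX1, show ({x, y, z} : Finset (Fin 5)) = insert x (insert y {z}) from rfl,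
      Finset.sum_insert (by decide), Finset.sum_insert (by decide),
      Finset.sum_singleton] at h
    linarith
  -- final contradiction helper
  have final : ∀ k2 k1 : Fin 5,
      (({k2, k1} : Finset (Fin 5)) = {v, x} ∨ ({k2, k1} : Finset (Fin 5)) = {v, y} ∨
       ({k2, k1} : Finset (Fin 5)) = {v, z} ∨ ({k2, k1} : Finset (Fin 5)) = {w, x} ∨
       ({k2, k1} : Finset (Fin 5)) = {w, y} ∨ ({k2, k1} : Finset (Fin 5)) = {w, z}) →
      k2 ≠ k1 → ({k2, k1} : Finset (Fin 5)) ≠ {x, y, z} →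
      p k2 ≤ a / 2 → p k1 ≤ b / 3 → False := by
    intro k2 k1 hmem hne12 hneY h2 h1
    have hYne : ({k2, k1} : Finset (Fin 5)) ≠ X 1 := by rw [hX1]; exact hneY
    rcases hopt 1 {k2, k1} hYne with h | h
    · rw [hX1] at h
      exact (hpref 1).2.1 _ _ (hB _ hmem) h
    · rw [t1, Finset.sum_pair hne12] at h
      linarith
  have h2 : p v ≤ a / 2 ∨ p w ≤ a / 2 := by
    rcases le_or_gt (p v) (a / 2) with h | h
    · exact Or.inl h
    · exact Or.inr (by linarith)
  have h1 : p x ≤ b / 3 ∨ p y ≤ b / 3 ∨ p z ≤ b / 3 := by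
    rcases le_or_gt (p x) (b / 3) with h | h
    · exact Or.inl h
    rcases le_or_gt (p y) (b / 3) with h' | h'
    · exact Or.inr (Or.inl h')
    · exact Or.inr (Or.inr (by linarith))
  rcases h2 with h2 | h2 <;> rcases h1 with h1 | h1 | h1
  · exact final v x (by decide) (by decide) (by decide) h2 h1
  · exact final v y (by tauto) (by decide) (by decide) h2 h1
  · exact final v z (by tauto) (by decide) (by decide) h2 h1
  · exact final w x (by tauto) (by decide) (by decide) h2 h1
  · exact final w y (by tauto) (by decide) (by decide) h2 h1
  · exact final w z (by tauto) (by decide) (by decide) h2 h1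

end FiveItemsCaseTwo
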